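/- arXiv:1406.6490 — 2 statements merged into one kernel-verified Lean document; each statement's English description precedes it below -/
import Mathlib

section
/- Let g : (0,1] → ℝ be nonnegative and measurable with ∫₀¹ g(x)² dx < ∞, and let α ≥ 1. Define f̂(x) = α·x^(α−1)·∫_x^1 y^(−α)·g(y) dy for x ∈ (0,1]. Then ∫₀¹ f̂(x)² dx ≤ (2α/(2α−1))² · ∫₀¹ g(x)² dx. -/
/-!
Write `β = α - 1/2`. Cauchy–Schwarz with the split `y^(-α) = y^(-(β+1)/2) · y^(-β/2)` gives
`f̂(x)² ≤ (α²/β) · x^(β-1) · ∫_x^1 y^(-β) g(y)² dy`. Integrating over `x ∈ (0,1]` and exchanging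
the order of integration, the inner integral `∫_0^y x^(β-1) dx = y^β/β` cancels the weight `y^(-β)`,
which leaves `(α/β)² ∫_0^1 g² = (2α/(2α-1))² ∫_0^1 g²`.
-/

open MeasureTheory Real Set

open scoped ENNReal

theorem ENNReal.sq_lintegral_mul_le {X : Type*} [MeasurableSpace X] {μ : Measure X}
    {f h : X → ℝ≥0∞} (hf : AEMeasurable f μ) (hh : AEMeasurable h μ) :
    (∫⁻ a, f a * h a ∂μ) ^ 2 ≤ (∫⁻ a, f a ^ 2 ∂μ) * ∫⁻ a, h a ^ 2 ∂μ := by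
  have key := ENNReal.lintegral_mul_le_Lp_mul_Lq μ Real.HolderConjugate.two_two hf hh
  simp only [Pi.mul_apply, ENNReal.rpow_two, one_div] at key
  calc (∫⁻ a, f a * h a ∂μ) ^ 2
      ≤ ((∫⁻ a, f a ^ 2 ∂μ) ^ (2⁻¹ : ℝ) * (∫⁻ a, h a ^ 2 ∂μ) ^ (2⁻¹ : ℝ)) ^ 2 := by gcongr
    _ = (∫⁻ a, f a ^ 2 ∂μ) * ∫⁻ a, h a ^ 2 ∂μ := by
        rw [mul_pow, ← ENNReal.rpow_two, ← ENNReal.rpow_two, ← ENNReal.rpow_mul,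
          ← ENNReal.rpow_mul]
        norm_num

theorem ENNReal.ofReal_sq (t : ℝ) : ENNReal.ofReal (t ^ 2) = ‖t‖ₑ ^ 2 := by
  rw [Real.enorm_eq_ofReal_abs, ← ENNReal.ofReal_pow (abs_nonneg t), sq_abs]

theorem ENNReal.ofReal_rpow_sq {y : ℝ} (hy : 0 ≤ y) (r : ℝ) :
    ENNReal.ofReal (y ^ r) ^ 2 = ENNReal.ofReal (y ^ (2 * r)) := by
  rw [← ENNReal.ofReal_pow (rpow_nonneg hy r), ← Real.rpow_mul_natCast hy, mul_comm]
  norm_num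

theorem setLIntegral_Ioc_rpow_le {β x : ℝ} (hβ : 0 < β) (hx : 0 < x) (b : ℝ) :
    ∫⁻ y in Ioc x b, ENNReal.ofReal (y ^ (-β - 1)) ≤ ENNReal.ofReal (x ^ (-β) / β) :=
  calc ∫⁻ y in Ioc x b, ENNReal.ofReal (y ^ (-β - 1))
      ≤ ∫⁻ y in Ioi x, ENNReal.ofReal (y ^ (-β - 1)) := lintegral_mono_set Ioc_subset_Ioi_self
    _ = ENNReal.ofReal (x ^ (-β) / β) := by
        have hexp : -β - 1 < -1 := by linarith
        rw [← ofReal_integral_eq_lintegral_ofReal (integrableOn_Ioi_rpow_of_lt hexp hx)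
          (ae_restrict_of_forall_mem measurableSet_Ioi fun y hy => rpow_nonneg (hx.trans hy).le _),
          integral_Ioi_rpow_of_lt hexp hx, sub_add_cancel, neg_div_neg_eq]

theorem setLIntegral_Ioo_zero_rpow {β y : ℝ} (hβ : 0 < β) (hy : 0 ≤ y) :
    ∫⁻ x in Ioo 0 y, ENNReal.ofReal (x ^ (β - 1)) = ENNReal.ofReal (y ^ β / β) := by
  have hexp : -1 < β - 1 := by linarith
  rw [restrict_Ioo_eq_restrict_Ioc, ← ofReal_integral_eq_lintegral_ofReal
    ((intervalIntegrable_iff_integrableOn_Ioc_of_le hy).1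
      (intervalIntegral.intervalIntegrable_rpow' hexp))
    (ae_restrict_of_forall_mem measurableSet_Ioc fun x hx => rpow_nonneg hx.1.le _),
    ← intervalIntegral.integral_of_le hy, integral_rpow (Or.inl hexp), sub_add_cancel,
    zero_rpow hβ.ne', sub_zero]

theorem lintegral_mul_setLIntegral_Ioc_swap {μ : Measure ℝ} [SFinite μ] {u G : ℝ → ℝ≥0∞}
    (hu : Measurable u) (hG : Measurable G) (a b : ℝ) :
    ∫⁻ x in Ioc a b, u x * ∫⁻ y in Ioc x b, G y ∂μ ∂μ
      = ∫⁻ y in Ioc a b, (∫⁻ x in Ioo a y, u x ∂μ) * G y ∂μ := by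
  set K : ℝ × ℝ → ℝ≥0∞ := {p | p.1 < p.2}.indicator fun p => u p.1 * G p.2
  have hK : Measurable K :=
    (by fun_prop : Measurable fun p : ℝ × ℝ => u p.1 * G p.2).indicator
      (measurableSet_lt measurable_fst measurable_snd)
  have h_fst : ∀ x ∈ Ioc a b, ∫⁻ y in Ioc a b, K (x, y) ∂μ = u x * ∫⁻ y in Ioc x b, G y ∂μ := by
    intro x hx
    have hset : Ioi x ∩ Ioc a b = Ioc x b := by
      ext y; simp only [mem_inter_iff, mem_Ioi, mem_Ioc]
      exact ⟨fun h => ⟨h.1, h.2.2⟩, fun h => ⟨h.1, hx.1.trans h.1, h.2⟩⟩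
    have hK_eq : (fun y => K (x, y)) = (Ioi x).indicator fun y => u x * G y := by
      ext y; by_cases h : x < y <;> simp [K, indicator, h]
    rw [hK_eq, lintegral_indicator measurableSet_Ioi, Measure.restrict_restrict measurableSet_Ioi,
      hset, lintegral_const_mul _ hG]
  have h_snd : ∀ y ∈ Ioc a b, ∫⁻ x in Ioc a b, K (x, y) ∂μ = (∫⁻ x in Ioo a y, u x ∂μ) * G y := by
    intro y hy
    have hset : Iio y ∩ Ioc a b = Ioo a y := by
      ext x; simp only [mem_inter_iff, mem_Iio, mem_Ioc, mem_Ioo]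
      exact ⟨fun h => ⟨h.2.1, h.1⟩, fun h => ⟨h.2, h.1, h.2.le.trans hy.2⟩⟩
    have hK_eq : (fun x => K (x, y)) = (Iio y).indicator fun x => u x * G y := by
      ext x; by_cases h : x < y <;> simp [K, indicator, h]
    rw [hK_eq, lintegral_indicator measurableSet_Iio, Measure.restrict_restrict measurableSet_Iio,
      hset, lintegral_mul_const _ hu]
  calc ∫⁻ x in Ioc a b, u x * ∫⁻ y in Ioc x b, G y ∂μ ∂μ
      = ∫⁻ x in Ioc a b, ∫⁻ y in Ioc a b, K (x, y) ∂μ ∂μ :=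
        (setLIntegral_congr_fun measurableSet_Ioc h_fst).symm
    _ = ∫⁻ y in Ioc a b, ∫⁻ x in Ioc a b, K (x, y) ∂μ ∂μ :=
        lintegral_lintegral_swap hK.aemeasurable
    _ = ∫⁻ y in Ioc a b, (∫⁻ x in Ioo a y, u x ∂μ) * G y ∂μ :=
        setLIntegral_congr_fun measurableSet_Ioc h_snd

theorem enorm_intervalIntegral_rpow_mul_sq_le {g : ℝ → ℝ} (hg : Measurable g) {β x b : ℝ}
    (hβ : 0 < β) (hx : 0 < x) (hxb : x ≤ b) :
    ‖∫ y in x..b, y ^ (-(β + 1 / 2)) * g y‖ₑ ^ 2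
      ≤ ENNReal.ofReal (x ^ (-β) / β) * ∫⁻ y in Ioc x b, ENNReal.ofReal (y ^ (-β)) * ‖g y‖ₑ ^ 2 := by
  have h_split : ∀ y ∈ Ioc x b, ‖y ^ (-(β + 1 / 2)) * g y‖ₑ
      = ENNReal.ofReal (y ^ (-(β + 1) / 2)) * (ENNReal.ofReal (y ^ (-β / 2)) * ‖g y‖ₑ) := by
    intro y hy
    have hy0 : 0 < y := hx.trans hy.1
    rw [enorm_mul, Real.enorm_of_nonneg (rpow_nonneg hy0.le _), ← mul_assoc,
      ← ENNReal.ofReal_mul (rpow_nonneg hy0.le _), ← rpow_add hy0]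
    ring_nf
  calc ‖∫ y in x..b, y ^ (-(β + 1 / 2)) * g y‖ₑ ^ 2
      ≤ (∫⁻ y in Ioc x b, ‖y ^ (-(β + 1 / 2)) * g y‖ₑ) ^ 2 := by
        rw [intervalIntegral.integral_of_le hxb]
        gcongr
        exact enorm_integral_le_lintegral_enorm _
    _ = (∫⁻ y in Ioc x b,
          ENNReal.ofReal (y ^ (-(β + 1) / 2)) * (ENNReal.ofReal (y ^ (-β / 2)) * ‖g y‖ₑ)) ^ 2 := by
        rw [setLIntegral_congr_fun measurableSet_Ioc h_split]
    _ ≤ (∫⁻ y in Ioc x b, ENNReal.ofReal (y ^ (-(β + 1) / 2)) ^ 2) *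
          ∫⁻ y in Ioc x b, (ENNReal.ofReal (y ^ (-β / 2)) * ‖g y‖ₑ) ^ 2 :=
        ENNReal.sq_lintegral_mul_le (by fun_prop) (by fun_prop)
    _ = (∫⁻ y in Ioc x b, ENNReal.ofReal (y ^ (-β - 1))) *
          ∫⁻ y in Ioc x b, ENNReal.ofReal (y ^ (-β)) * ‖g y‖ₑ ^ 2 := by
        congr 1 <;> refine setLIntegral_congr_fun measurableSet_Ioc fun y hy => ?_
        · rw [ENNReal.ofReal_rpow_sq (hx.trans hy.1).le]
          ring_nf
        · rw [mul_pow, ENNReal.ofReal_rpow_sq (hx.trans hy.1).le]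
          ring_nf
    _ ≤ _ := by gcongr; exact setLIntegral_Ioc_rpow_le hβ hx b

theorem lintegral_rpow_mul_setLIntegral_Ioc_rpow_mul {β : ℝ} (hβ : 0 < β) {G : ℝ → ℝ≥0∞}
    (hG : Measurable G) (b : ℝ) :
    ∫⁻ x in Ioc 0 b, ENNReal.ofReal (x ^ (β - 1)) * ∫⁻ y in Ioc x b, ENNReal.ofReal (y ^ (-β)) * G y
      = ENNReal.ofReal β⁻¹ * ∫⁻ y in Ioc 0 b, G y := by
  rw [lintegral_mul_setLIntegral_Ioc_swap (by fun_prop) (by fun_prop), ← lintegral_const_mul _ hG]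
  refine setLIntegral_congr_fun measurableSet_Ioc fun y hy => ?_
  rw [setLIntegral_Ioo_zero_rpow hβ hy.1.le, ← mul_assoc, ← ENNReal.ofReal_mul
    (div_nonneg (rpow_nonneg hy.1.le _) hβ.le), div_mul_eq_mul_div, ← rpow_add hy.1, add_neg_cancel,
    rpow_zero, one_div]

noncomputable def alphaLEstimate (α : ℝ) (g : ℝ → ℝ) (x : ℝ) : ℝ :=
  α * x ^ (α - 1) * ∫ y in x..1, y ^ (-α) * g y

theorem ofReal_alphaLEstimate_sq_le {g : ℝ → ℝ} (hg : Measurable g) {α x : ℝ} (hα : 1 / 2 < α)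
    (hx : x ∈ Ioc 0 1) :
    ENNReal.ofReal (alphaLEstimate α g x ^ 2)
      ≤ ENNReal.ofReal (α ^ 2 / (α - 1 / 2)) * (ENNReal.ofReal (x ^ (α - 1 / 2 - 1)) *
          ∫⁻ y in Ioc x 1, ENNReal.ofReal (y ^ (-(α - 1 / 2))) * ‖g y‖ₑ ^ 2) := by
  have hβ : 0 < α - 1 / 2 := by linarith
  have h_integral := enorm_intervalIntegral_rpow_mul_sq_le hg hβ hx.1 hx.2
  rw [sub_add_cancel] at h_integral
  have h_pow : (x ^ (α - 1)) ^ 2 * x ^ (-(α - 1 / 2)) = x ^ (α - 1 / 2 - 1) := by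
    rw [← rpow_mul_natCast hx.1.le, ← rpow_add hx.1]
    ring_nf
  have h_const : (α * x ^ (α - 1)) ^ 2 * (x ^ (-(α - 1 / 2)) / (α - 1 / 2))
      = α ^ 2 / (α - 1 / 2) * x ^ (α - 1 / 2 - 1) := by
    rw [← h_pow]
    ring
  calc ENNReal.ofReal (alphaLEstimate α g x ^ 2)
      = ENNReal.ofReal ((α * x ^ (α - 1)) ^ 2) * ‖∫ y in x..1, y ^ (-α) * g y‖ₑ ^ 2 := by
        rw [alphaLEstimate, ENNReal.ofReal_sq, enorm_mul, mul_pow, ← ENNReal.ofReal_sq]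
    _ ≤ ENNReal.ofReal ((α * x ^ (α - 1)) ^ 2) * (ENNReal.ofReal (x ^ (-(α - 1 / 2)) / (α - 1 / 2)) *
          ∫⁻ y in Ioc x 1, ENNReal.ofReal (y ^ (-(α - 1 / 2))) * ‖g y‖ₑ ^ 2) := by
        gcongr
    _ = _ := by
        rw [← mul_assoc, ← ENNReal.ofReal_mul (sq_nonneg _), h_const,
          ENNReal.ofReal_mul (div_nonneg (sq_nonneg α) hβ.le), mul_assoc]

theorem alphaL_competitive_convex_general
    (g : ℝ → ℝ) (α : ℝ) (hα : 1 ≤ α)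
    (hg_meas : Measurable g) :
    (∫⁻ x in Set.Ioc (0 : ℝ) 1,
        ENNReal.ofReal ((α * x ^ (α - 1) * ∫ y in x..1, y ^ (-α) * g y) ^ 2))
      ≤ ENNReal.ofReal ((2 * α / (2 * α - 1)) ^ 2) *
          ∫⁻ x in Set.Ioc (0 : ℝ) 1, ENNReal.ofReal ((g x) ^ 2) := by
  have hβ : 0 < α - 1 / 2 := by linarith
  calc (∫⁻ x in Ioc 0 1, ENNReal.ofReal (alphaLEstimate α g x ^ 2))
      ≤ ∫⁻ x in Ioc 0 1, ENNReal.ofReal (α ^ 2 / (α - 1 / 2)) *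
          (ENNReal.ofReal (x ^ (α - 1 / 2 - 1)) *
            ∫⁻ y in Ioc x 1, ENNReal.ofReal (y ^ (-(α - 1 / 2))) * ‖g y‖ₑ ^ 2) :=
        setLIntegral_mono' measurableSet_Ioc fun x hx =>
          ofReal_alphaLEstimate_sq_le hg_meas (by linarith) hx
    _ = ENNReal.ofReal (α ^ 2 / (α - 1 / 2)) *
          (ENNReal.ofReal (α - 1 / 2)⁻¹ * ∫⁻ y in Ioc 0 1, ‖g y‖ₑ ^ 2) := by
        rw [lintegral_const_mul' _ _ ENNReal.ofReal_ne_top,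
          lintegral_rpow_mul_setLIntegral_Ioc_rpow_mul hβ (by fun_prop)]
    _ = _ := by
        rw [← mul_assoc, ← ENNReal.ofReal_mul (div_nonneg (sq_nonneg α) hβ.le)]
        congr 2
        · field_simp
        · simp only [ENNReal.ofReal_sq]

/-- For nonnegative measurable `g` on `(0,1]` with `∫₀¹ g² < ∞` and `α ≥ 1`,
the αL* estimate `f̂(x) = α x^(α-1) ∫_x^1 y^(-α) g(y) dy` satisfies
`∫₀¹ f̂² ≤ (2α/(2α-1))² ∫₀¹ g²`. -/
theorem alphaL_competitive_convex
    (g : ℝ → ℝ) (α : ℝ) (hα : 1 ≤ α)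
    (hg_nonneg : ∀ x ∈ Set.Ioc (0 : ℝ) 1, 0 ≤ g x)
    (hg_meas : Measurable g)
    (hg_sq : ∫⁻ x in Set.Ioc (0 : ℝ) 1, ENNReal.ofReal ((g x) ^ 2) < ⊤) :
    (∫⁻ x in Set.Ioc (0 : ℝ) 1,
        ENNReal.ofReal ((α * x ^ (α - 1) * ∫ y in x..1, y ^ (-α) * g y) ^ 2))
      ≤ ENNReal.ofReal ((2 * α / (2 * α - 1)) ^ 2) *
          ∫⁻ x in Set.Ioc (0 : ℝ) 1, ENNReal.ofReal ((g x) ^ 2) :=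
  alphaL_competitive_convex_general g α hα hg_meas
end

section
/- Let 0 ≤ a < b, α ≥ 1, A ≥ 0, and let g : [a,b] → ℝ be nonnegative and integrable with ∫_a^b g(x) dx = A·(b−a). Then ∫_a^b g(x)·x^(α−1) dx ≤ A·(b^α − a^α), and ∫_a^b A·x^(α−1) dx = A·(b^α − a^α)/α; consequently ∫_a^b g(x)·x^(α−1) dx ≤ α·∫_a^b A·x^(α−1) dx. -/
open MeasureTheory Real Set

/-- For `0 ≤ a < b`, `α ≥ 1`, `A ≥ 0`, and nonnegative integrable `g` on
`[a,b]` with `∫_a^b g = A(b-a)`: `∫_a^b g(x) x^(α-1) dx ≤ A(b^α - a^α)`,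
`∫_a^b A x^(α-1) dx = A(b^α - a^α)/α`, and consequently
`∫_a^b g(x) x^(α-1) dx ≤ α ∫_a^b A x^(α-1) dx`. -/
theorem first_summand_bound
    (a b α A : ℝ) (ha : 0 ≤ a) (hab : a < b) (hα : 1 ≤ α) (hA : 0 ≤ A)
    (g : ℝ → ℝ)
    (hg_nonneg : ∀ x ∈ Set.Icc a b, 0 ≤ g x)
    (hg_int : IntervalIntegrable g MeasureTheory.volume a b)
    (hg_mass : ∫ x in a..b, g x = A * (b - a)) :
    (∫ x in a..b, g x * x ^ (α - 1)) ≤ A * (b ^ α - a ^ α) ∧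
    (∫ x in a..b, A * x ^ (α - 1)) = A * (b ^ α - a ^ α) / α ∧
    (∫ x in a..b, g x * x ^ (α - 1)) ≤ α * ∫ x in a..b, A * x ^ (α - 1) := by
  have hα0 : (0:ℝ) < α := lt_of_lt_of_le one_pos hα
  have hα1 : 0 ≤ α - 1 := by linarith
  have hb0 : 0 < b := lt_of_le_of_lt ha hab
  -- continuity of x ↦ x^(α-1) on [a,b]
  have hcont : ContinuousOn (fun x : ℝ => x ^ (α - 1)) (Set.uIcc a b) := by
    apply ContinuousOn.rpow_const continuousOn_id
    intro x _; right; exact hα1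
  have hint2 : IntervalIntegrable (fun x => g x * x ^ (α - 1)) volume a b :=
    hg_int.mul_continuousOn hcont
  -- integral of x^(α-1)
  have hrpow : (∫ x in a..b, x ^ (α - 1)) = (b ^ α - a ^ α) / α := by
    rw [integral_rpow (Or.inl (by linarith : (-1:ℝ) < α - 1))]
    ring_nf
  have hsecond : (∫ x in a..b, A * x ^ (α - 1)) = A * (b ^ α - a ^ α) / α := by
    rw [intervalIntegral.integral_const_mul, hrpow]; ring
  -- key pointwise bound
  have hmono : ∀ x ∈ Set.Icc a b, g x * x ^ (α - 1) ≤ g x * b ^ (α - 1) := by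
    intro x hx
    exact mul_le_mul_of_nonneg_left
      (Real.rpow_le_rpow (le_trans ha hx.1) hx.2 hα1) (hg_nonneg x hx)
  have hint3 : IntervalIntegrable (fun x => g x * b ^ (α - 1)) volume a b :=
    hg_int.mul_const _
  have h1 : (∫ x in a..b, g x * x ^ (α - 1)) ≤ ∫ x in a..b, g x * b ^ (α - 1) :=
    intervalIntegral.integral_mono_on hab.le hint2 hint3 hmono
  have h2 : (∫ x in a..b, g x * b ^ (α - 1)) = A * (b - a) * b ^ (α - 1) := by
    rw [intervalIntegral.integral_mul_const, hg_mass]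
  -- (b-a) * b^(α-1) ≤ b^α - a^α
  have hba : (b - a) * b ^ (α - 1) ≤ b ^ α - a ^ α := by
    have hbα : b ^ α = b * b ^ (α - 1) := by
      rw [show α = 1 + (α - 1) by ring, Real.rpow_add hb0, Real.rpow_one]
      ring_nf
    have haα : a ^ α ≤ a * b ^ (α - 1) := by
      have : a ^ α = a * a ^ (α - 1) := by
        rw [show α = 1 + (α - 1) by ring, Real.rpow_add' ha (by linarith), Real.rpow_one]; ring_nf
      rw [this]
      exact mul_le_mul_of_nonneg_left (Real.rpow_le_rpow ha hab.le hα1) ha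
    nlinarith
  have hfirst : (∫ x in a..b, g x * x ^ (α - 1)) ≤ A * (b ^ α - a ^ α) := by
    calc (∫ x in a..b, g x * x ^ (α - 1)) ≤ A * (b - a) * b ^ (α - 1) := h1.trans_eq h2
    _ ≤ A * (b ^ α - a ^ α) := by nlinarith
  refine ⟨hfirst, hsecond, ?_⟩
  rw [hsecond]
  rw [mul_div_assoc', mul_comm α, mul_div_assoc, div_self hα0.ne', mul_one]
  exact hfirst
end
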